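/- CDF of the skew-normal distribution: if Y ∼ SN_p(μ, Σ, λ) (i.e., ESN with τ = 0), then for any y ∈ ℝ^p, P(Y ≤ y) = 2 Φ_{p+1}((yᵀ, 0)ᵀ; μ*, Ω), with μ* = (μᵀ, 0)ᵀ and Ω the block matrix [Σ, -Δ; -Δᵀ, 1], Δ = Σ^{1/2} λ / √(1+λᵀλ). -/

import Mathlib

open MeasureTheory Real Matrix Filter

/-- Standard normal cdf Φ. -/
noncomputable def stdCDF (t : ℝ) : ℝ :=
  ∫ x in Set.Iic t, ProbabilityTheory.gaussianPDFReal 0 1 x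

/-- Univariate normal density with mean `m` and variance `v`. -/
noncomputable def normPDF (m v x : ℝ) : ℝ :=
  (Real.sqrt (2 * π * v))⁻¹ * Real.exp (-((x - m) ^ 2 / (2 * v)))

/-- Multivariate normal density with mean `μ` and covariance `S`. -/
noncomputable def mvnPDF {n : Type*} [Fintype n] [DecidableEq n] (μ : n → ℝ) (S : Matrix n n ℝ)
    (x : n → ℝ) : ℝ :=
  (2 * π) ^ (-(Fintype.card n : ℝ) / 2) * S.det ^ (-(1 : ℝ) / 2) *
    Real.exp (-(dotProduct (x - μ) (S⁻¹ *ᵥ (x - μ))) / 2)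

/-- The square root `PosSemidef.sqrt` of the older Mathlib, spelled out. -/
noncomputable def psdSqrt {n : Type*} [Fintype n] [DecidableEq n] {A : Matrix n n ℝ}
    (hA : A.PosSemidef) : Matrix n n ℝ :=
  (hA.1.eigenvectorUnitary : Matrix n n ℝ) * diagonal ((√·) ∘ hA.1.eigenvalues) *
    (star hA.1.eigenvectorUnitary : Matrix n n ℝ)

/-- Extended skew-normal density. -/
noncomputable def esnPDF {n : Type*} [Fintype n] [DecidableEq n] (μ : n → ℝ)
    (S : Matrix n n ℝ) (hS : S.PosDef) (l : n → ℝ) (τ : ℝ) (y : n → ℝ) : ℝ :=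
  (stdCDF (τ / Real.sqrt (1 + dotProduct l l)))⁻¹ * mvnPDF μ S y *
    stdCDF (τ + dotProduct l ((psdSqrt hS.posSemidef)⁻¹ *ᵥ (y - μ)))

/-! Set `c = 1 + λᵀλ`. The Schur complement of `Σ` in `Ω` is `1 - Δᵀ Σ⁻¹ Δ = 1/c`, so the
`N_{p+1}((μ, 0), Ω)` density at `(x, t)` factors as `φ_p(x; μ, Σ)` times the univariate normal
density of `t` with mean `-λᵀ Σ^{-1/2} (x - μ) / √c` and variance `1/c`. Integrating `t` over
`(-∞, 0]` turns the second factor into `Φ(λᵀ Σ^{-1/2} (x - μ))`, which is half the skew-normal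
density at `x`; integrating `x` over `{x ≤ y}` (Tonelli) gives the claim. -/

open ProbabilityTheory
open scoped NNReal ENNReal

section BlockMatrix

theorem Matrix.IsSymm.dotProduct_mulVec_comm {n R : Type*} [Fintype n] [CommSemiring R]
    {A : Matrix n n R} (hA : A.IsSymm) (u v : n → R) : u ⬝ᵥ (A *ᵥ v) = v ⬝ᵥ (A *ᵥ u) := by
  rw [dotProduct_mulVec, ← mulVec_transpose, hA.eq, dotProduct_comm]

variable {n K : Type*} [Fintype n] [DecidableEq n] [Field K]

theorem det_fromBlocks_replicateCol_replicateRow_one (S : Matrix n n K) [Invertible S]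
    (b : n → K) :
    (fromBlocks S (replicateCol Unit b) (replicateRow Unit b) 1).det =
      S.det * (1 - b ⬝ᵥ (S⁻¹ *ᵥ b)) := by
  rw [det_fromBlocks₁₁, invOf_eq_nonsing_inv, Matrix.mul_assoc, ← replicateCol_mulVec,
    replicateRow_mul_replicateCol, det_unique (1 - _)]
  rfl

theorem fromBlocks_replicateCol_replicateRow_one_mulVec (S : Matrix n n K) (hdet : IsUnit S.det)
    (b u : n → K) (t : K) (hs : 1 - b ⬝ᵥ (S⁻¹ *ᵥ b) ≠ 0) :
    fromBlocks S (replicateCol Unit b) (replicateRow Unit b) 1 *ᵥ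
        Sum.elim (S⁻¹ *ᵥ (u - ((t - b ⬝ᵥ (S⁻¹ *ᵥ u)) / (1 - b ⬝ᵥ (S⁻¹ *ᵥ b))) • b))
          (fun _ => (t - b ⬝ᵥ (S⁻¹ *ᵥ u)) / (1 - b ⬝ᵥ (S⁻¹ *ᵥ b))) =
      Sum.elim u (fun _ => t) := by
  set k := (t - b ⬝ᵥ (S⁻¹ *ᵥ u)) / (1 - b ⬝ᵥ (S⁻¹ *ᵥ b)) with hk
  have hcol : replicateCol Unit b *ᵥ (fun _ => k) = k • b := by
    ext i; simp [replicateCol, mulVec, dotProduct, mul_comm]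
  rw [fromBlocks_mulVec, Sum.elim_comp_inl, Sum.elim_comp_inr, mulVec_mulVec,
    mul_nonsing_inv _ hdet, one_mulVec, one_mulVec, hcol, sub_add_cancel]
  congr 1
  funext
  rw [Pi.add_apply, replicateRow_mulVec_eq_const, Function.const_apply, mulVec_sub,
    mulVec_smul, dotProduct_sub, dotProduct_smul, smul_eq_mul, hk]
  field_simp
  ring

theorem sumElim_dotProduct_inv_fromBlocks_mulVec {S : Matrix n n K} (hS : S.IsSymm)
    (hdet : IsUnit S.det) (b u : n → K) (t : K) (hs : 1 - b ⬝ᵥ (S⁻¹ *ᵥ b) ≠ 0) :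
    Sum.elim u (fun _ => t) ⬝ᵥ
        ((fromBlocks S (replicateCol Unit b) (replicateRow Unit b) 1)⁻¹ *ᵥ
          Sum.elim u (fun _ => t)) =
      u ⬝ᵥ (S⁻¹ *ᵥ u) + (t - b ⬝ᵥ (S⁻¹ *ᵥ u)) ^ 2 / (1 - b ⬝ᵥ (S⁻¹ *ᵥ b)) := by
  have := S.invertibleOfIsUnitDet hdet
  have := (fromBlocks S (replicateCol Unit b) (replicateRow Unit b) 1).invertibleOfIsUnitDet
    (by rw [det_fromBlocks_replicateCol_replicateRow_one]; exact hdet.mul hs.isUnit)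
  rw [inv_mulVec_eq_vec (fromBlocks_replicateCol_replicateRow_one_mulVec S hdet b u t hs).symm,
    sumElim_dotProduct_sumElim, mulVec_sub, mulVec_smul, dotProduct_sub, dotProduct_smul,
    hS.inv.dotProduct_mulVec_comm u b]
  simp only [dotProduct, Finset.univ_unique, Finset.sum_singleton, smul_eq_mul]
  field_simp
  ring

theorem mulVec_dotProduct_inv_mul_self_mulVec {R : Matrix n n K} (hR : R.IsSymm)
    (hdet : IsUnit R.det) (l u : n → K) :
    (R *ᵥ l) ⬝ᵥ ((R * R)⁻¹ *ᵥ u) = l ⬝ᵥ (R⁻¹ *ᵥ u) := by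
  rw [dotProduct_comm, hR.dotProduct_mulVec_comm, Matrix.mul_inv_rev, mulVec_mulVec,
    ← Matrix.mul_assoc, mul_nonsing_inv _ hdet, Matrix.one_mul]

end BlockMatrix

section SquareRoot

variable {n : Type*} [Fintype n] [DecidableEq n] {A : Matrix n n ℝ}

lemma psdSqrt_mul_self (hA : A.PosSemidef) : psdSqrt hA * psdSqrt hA = A := by
  have hU : (star hA.1.eigenvectorUnitary : Matrix n n ℝ) * hA.1.eigenvectorUnitary = 1 :=
    Unitary.coe_star_mul_self _
  conv_rhs => rw [hA.1.spectral_theorem, Unitary.conjStarAlgAut_apply]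
  simp only [psdSqrt, Matrix.mul_assoc]
  rw [← Matrix.mul_assoc (star _ : Matrix n n ℝ), hU, Matrix.one_mul,
    ← Matrix.mul_assoc (diagonal _), diagonal_mul_diagonal]
  congr 3
  funext i
  simp [Real.mul_self_sqrt (hA.eigenvalues_nonneg i)]

lemma isSymm_psdSqrt (hA : A.PosSemidef) : (psdSqrt hA).IsSymm := by
  rw [IsSymm, psdSqrt, star_eq_conjTranspose, conjTranspose_eq_transpose_of_trivial]
  simp [Matrix.transpose_mul, Matrix.mul_assoc]

end SquareRoot

section Gaussian

lemma ofReal_stdCDF (t : ℝ) : ENNReal.ofReal (stdCDF t) = gaussianReal 0 1 (Set.Iic t) :=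
  (gaussianReal_apply_eq_integral 0 one_ne_zero _).symm

lemma stdCDF_nonneg (t : ℝ) : 0 ≤ stdCDF t :=
  integral_nonneg fun x => gaussianPDFReal_nonneg 0 1 x

lemma stdCDF_mono : Monotone stdCDF := fun _ _ hst =>
  setIntegral_mono_set (integrable_gaussianPDFReal 0 1).integrableOn
    (ae_of_all _ fun x => gaussianPDFReal_nonneg 0 1 x) (Set.Iic_subset_Iic.mpr hst).eventuallyLE

lemma stdCDF_zero : stdCDF 0 = 2⁻¹ := by
  have hint : Integrable (gaussianPDFReal 0 1) := integrable_gaussianPDFReal 0 1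
  have hsymm : stdCDF 0 = ∫ x in Set.Ioi 0, gaussianPDFReal 0 1 x := by
    rw [stdCDF, ← neg_zero, ← integral_comp_neg_Iic]
    simp [gaussianPDFReal]
  have htotal : stdCDF 0 + ∫ x in Set.Ioi 0, gaussianPDFReal 0 1 x = 1 := by
    rw [stdCDF, ← setIntegral_union (Set.Iic_disjoint_Ioi le_rfl) measurableSet_Ioi
      hint.integrableOn hint.integrableOn, Set.Iic_union_Ioi, Measure.restrict_univ,
      integral_gaussianPDFReal_eq_one 0 one_ne_zero]
  linarith

lemma gaussianReal_eq_map_gaussianReal_zero_one (m : ℝ) (v : ℝ≥0) :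
    gaussianReal m v = (gaussianReal 0 1).map (fun x => √v * x + m) := by
  have hscale : (gaussianReal 0 1).map (fun x => √v * x) = gaussianReal 0 v := by
    rw [gaussianReal_map_const_mul, mul_zero, mul_one]
    congr 1
    exact NNReal.eq (by simp)
  rw [← Function.comp_def (· + m) (√v * ·), ← Measure.map_map (by fun_prop) (by fun_prop), hscale,
    gaussianReal_map_add_const, zero_add]

lemma lintegral_Iic_gaussianPDF (m : ℝ) {v : ℝ≥0} (hv : v ≠ 0) (a : ℝ) :
    ∫⁻ t in Set.Iic a, gaussianPDF m v t = ENNReal.ofReal (stdCDF ((a - m) / √v)) := by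
  have hsqrt : 0 < √(v : ℝ) := sqrt_pos.mpr (NNReal.coe_pos.mpr (pos_iff_ne_zero.mpr hv))
  have hpre : (fun x => √v * x + m) ⁻¹' Set.Iic a = Set.Iic ((a - m) / √v) := by
    ext x
    simp only [Set.mem_preimage, Set.mem_Iic, le_div_iff₀ hsqrt]
    constructor <;> intro h <;> linarith
  rw [← gaussianReal_apply m hv, gaussianReal_eq_map_gaussianReal_zero_one,
    Measure.map_apply (by fun_prop) measurableSet_Iic, hpre, ofReal_stdCDF]

variable {n : Type*} [Fintype n] [DecidableEq n]

-- For `S.det < 0`, `Real.rpow` gives `S.det ^ (-1/2) = 0` since `cos (-π/2) = 0`.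
lemma mvnPDF_nonneg (μ : n → ℝ) (S : Matrix n n ℝ) (x : n → ℝ) : 0 ≤ mvnPDF μ S x := by
  have hdet : 0 ≤ S.det ^ (-(1 : ℝ) / 2) := by
    rcases le_or_gt 0 S.det with h | h
    · exact rpow_nonneg h _
    · rw [rpow_def_of_neg h, show -(1 : ℝ) / 2 * π = -(π / 2) by ring, cos_neg, cos_pi_div_two,
        mul_zero]
  unfold mvnPDF
  positivity

lemma continuous_mvnPDF (μ : n → ℝ) (S : Matrix n n ℝ) : Continuous (mvnPDF μ S) := by
  unfold mvnPDF
  fun_prop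

lemma esnPDF_nonneg {S : Matrix n n ℝ} (hS : S.PosDef) (μ l : n → ℝ) (τ : ℝ) (x : n → ℝ) :
    0 ≤ esnPDF μ S hS l τ x :=
  mul_nonneg (mul_nonneg (inv_nonneg.mpr (stdCDF_nonneg _)) (mvnPDF_nonneg _ _ _))
    (stdCDF_nonneg _)

lemma measurable_esnPDF {S : Matrix n n ℝ} (hS : S.PosDef) (μ l : n → ℝ) (τ : ℝ) :
    Measurable (esnPDF μ S hS l τ) :=
  ((continuous_mvnPDF μ S).measurable.const_mul _).mul
    (stdCDF_mono.measurable.comp (by fun_prop))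

theorem mvnPDF_sumElim_fromBlocks {S : Matrix n n ℝ} (hS : S.PosDef) (μ b x : n → ℝ) (t : ℝ)
    {v : ℝ≥0} (hv : (v : ℝ) = 1 - b ⬝ᵥ (S⁻¹ *ᵥ b)) (hv0 : v ≠ 0) :
    mvnPDF (Sum.elim μ fun _ => 0) (fromBlocks S (replicateCol Unit b) (replicateRow Unit b) 1)
        (Sum.elim x fun _ => t) =
      mvnPDF μ S x * gaussianPDFReal (b ⬝ᵥ (S⁻¹ *ᵥ (x - μ))) v t := by
  have := hS.isUnit.invertible
  have hv_pos : (0 : ℝ) < v := NNReal.coe_pos.mpr (pos_iff_ne_zero.mpr hv0)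
  have h2π : (0 : ℝ) < 2 * π := by positivity
  have hsub : Sum.elim x (fun _ => t) - Sum.elim μ (fun _ => 0) =
      Sum.elim (x - μ) (fun _ : Unit => t) := by
    funext j; cases j <;> simp
  unfold mvnPDF
  rw [gaussianPDFReal, hsub, sumElim_dotProduct_inv_fromBlocks_mulVec
    (isHermitian_iff_isSymm.mp hS.isHermitian) hS.det_pos.ne'.isUnit _ _ _ (hv ▸ hv_pos.ne'),
    det_fromBlocks_replicateCol_replicateRow_one, ← hv,
    Fintype.card_sum, Fintype.card_unit, Nat.cast_add, Nat.cast_one,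
    mul_rpow hS.det_pos.le hv_pos.le, sqrt_eq_rpow, ← rpow_neg (by positivity),
    mul_rpow h2π.le hv_pos.le]
  have hexp : rexp (-((x - μ) ⬝ᵥ (S⁻¹ *ᵥ (x - μ)) + (t - b ⬝ᵥ (S⁻¹ *ᵥ (x - μ))) ^ 2 / v) / 2) =
      rexp (-((x - μ) ⬝ᵥ (S⁻¹ *ᵥ (x - μ))) / 2) *
        rexp (-(t - b ⬝ᵥ (S⁻¹ *ᵥ (x - μ))) ^ 2 / (2 * v)) := by
    rw [← exp_add]
    congr 1
    field_simp
    ring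
  rw [hexp, show -((Fintype.card n : ℝ) + 1) / 2 = -(Fintype.card n : ℝ) / 2 + -(1 / 2) by ring,
    rpow_add h2π]
  ring_nf

lemma ofReal_esnPDF_zero_eq_two_mul_lintegral {S : Matrix n n ℝ} (hS : S.PosDef) (μ l x : n → ℝ)
    {Δ : n → ℝ} (hΔ : Δ = (√(1 + l ⬝ᵥ l))⁻¹ • (psdSqrt hS.posSemidef *ᵥ l)) :
    ENNReal.ofReal (esnPDF μ S hS l 0 x) =
      2 * ∫⁻ t in Set.Iic 0, ENNReal.ofReal (mvnPDF (Sum.elim μ fun _ => 0)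
        (fromBlocks S (replicateCol Unit (-Δ)) (replicateRow Unit (-Δ)) 1)
        (Sum.elim x fun _ => t)) := by
  set R := psdSqrt hS.posSemidef
  set c := 1 + l ⬝ᵥ l
  set η := l ⬝ᵥ (R⁻¹ *ᵥ (x - μ))
  have hc : 0 < c :=
    add_pos_of_pos_of_nonneg one_pos (Finset.sum_nonneg fun i _ => mul_self_nonneg (l i))
  have hRR : R * R = S := psdSqrt_mul_self hS.posSemidef
  have hRdet : IsUnit R.det := by
    refine isUnit_iff_ne_zero.mpr fun h => hS.det_pos.ne' ?_
    rw [← hRR, det_mul, h, zero_mul]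
  have hR := isSymm_psdSqrt hS.posSemidef
  have hquad : 1 - (-Δ) ⬝ᵥ (S⁻¹ *ᵥ -Δ) = c⁻¹ := by
    rw [hΔ, ← hRR, mulVec_neg, neg_dotProduct_neg, mulVec_smul, smul_dotProduct, dotProduct_smul,
      mulVec_dotProduct_inv_mul_self_mulVec hR hRdet, mulVec_mulVec, nonsing_inv_mul _ hRdet,
      one_mulVec, smul_eq_mul, smul_eq_mul, ← mul_assoc, ← mul_inv, mul_self_sqrt hc.le]
    field_simp
    ring
  have hmean : (-Δ) ⬝ᵥ (S⁻¹ *ᵥ (x - μ)) = -((√c)⁻¹ * η) := by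
    rw [hΔ, ← hRR, neg_dotProduct, smul_dotProduct,
      mulVec_dotProduct_inv_mul_self_mulVec hR hRdet, smul_eq_mul]
  let v : ℝ≥0 := ⟨c⁻¹, by positivity⟩
  have hv0 : v ≠ 0 := fun h => (inv_pos.mpr hc).ne' (congrArg NNReal.toReal h)
  have hcdf : (0 - -((√c)⁻¹ * η)) / √(v : ℝ) = η := by
    rw [show (v : ℝ) = c⁻¹ from rfl, sqrt_inv, zero_sub, neg_neg]
    field_simp
  simp_rw [mvnPDF_sumElim_fromBlocks hS μ (-Δ) x (v := v) (hv := hquad.symm) (hv0 := hv0), hmean,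
    ENNReal.ofReal_mul (mvnPDF_nonneg _ _ _)]
  change _ = 2 * ∫⁻ t in Set.Iic 0, _ * gaussianPDF _ v t
  rw [lintegral_const_mul' _ _ ENNReal.ofReal_ne_top, lintegral_Iic_gaussianPDF _ hv0, hcdf,
    esnPDF, zero_div, stdCDF_zero, inv_inv, zero_add, mul_assoc, ENNReal.ofReal_mul zero_le_two,
    ENNReal.ofReal_mul (mvnPDF_nonneg _ _ _), ENNReal.ofReal_ofNat]

end Gaussian

theorem setLIntegral_Iic_sumElim {ι : Type*} [Fintype ι] {f : (ι ⊕ Unit → ℝ) → ℝ≥0∞}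
    (hf : Measurable f) (y : ι → ℝ) (a : ℝ) :
    ∫⁻ z in Set.Iic (Sum.elim y fun _ => a), f z =
      ∫⁻ x in Set.Iic y, ∫⁻ t in Set.Iic a, f (Sum.elim x fun _ => t) := by
  let e : (ι → ℝ) × ℝ ≃ᵐ (ι ⊕ Unit → ℝ) :=
    ((MeasurableEquiv.refl _).prodCongr (MeasurableEquiv.funUnique Unit ℝ).symm).trans
      (MeasurableEquiv.sumPiEquivProdPi fun _ => ℝ).symm
  have he : ∀ q, e q = Sum.elim q.1 fun _ => q.2 := fun q => by
    funext j; cases j <;> rfl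
  have he_mp : MeasurePreserving e volume volume :=
    (volume_measurePreserving_sumPiEquivProdPi_symm _).comp
      ((MeasurePreserving.id volume).prod (measurePreserving_funUnique volume Unit).symm)
  have hpre : e ⁻¹' Set.Iic (Sum.elim y fun _ => a) = Set.Iic y ×ˢ Set.Iic a := by
    ext ⟨x, t⟩
    simp [he, Pi.le_def]
  rw [← he_mp.setLIntegral_comp_preimage_emb e.measurableEmbedding, hpre, Measure.volume_eq_prod,
    setLIntegral_prod (fun q => f (e q)) (hf.comp e.measurable).aemeasurable]
  simp only [he]

theorem sn_cdf_general {p : ℕ} (μ : Fin p → ℝ) (S : Matrix (Fin p) (Fin p) ℝ)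
    (hS : S.PosDef) (l : Fin p → ℝ)
    {α : Type*} [MeasurableSpace α] (P : Measure α)
    (Y : α → Fin p → ℝ)
    (hY : ∀ A : Set (Fin p → ℝ), MeasurableSet A →
      (P (Y ⁻¹' A)).toReal = ∫ x in A, esnPDF μ S hS l 0 x)
    (Δ : Fin p → ℝ)
    (hΔ : Δ = (Real.sqrt (1 + dotProduct l l))⁻¹ • (psdSqrt hS.posSemidef *ᵥ l))
    (Ωmat : Matrix (Fin p ⊕ Unit) (Fin p ⊕ Unit) ℝ)
    (hΩ : Ωmat = Matrix.fromBlocks S (Matrix.of fun i (_ : Unit) => -Δ i)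
      (Matrix.of fun (_ : Unit) j => -Δ j) 1)
    (y : Fin p → ℝ) :
    (P {ω | ∀ i, Y ω i ≤ y i}).toReal =
      2 * ∫ x in {x : (Fin p ⊕ Unit) → ℝ |
            ∀ j, x j ≤ Sum.elim y (fun _ => (0 : ℝ)) j},
          mvnPDF (Sum.elim μ (fun _ => (0 : ℝ))) Ωmat x := by
  have hA : {ω | ∀ i, Y ω i ≤ y i} = Y ⁻¹' Set.Iic y := rfl
  obtain rfl : Ωmat = fromBlocks S (replicateCol Unit (-Δ)) (replicateRow Unit (-Δ)) 1 := hΩ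
  rw [hA, hY _ measurableSet_Iic,
    integral_eq_lintegral_of_nonneg_ae (ae_of_all _ (esnPDF_nonneg hS μ l 0))
      (measurable_esnPDF hS μ l 0).aestronglyMeasurable,
    integral_eq_lintegral_of_nonneg_ae (ae_of_all _ (mvnPDF_nonneg _ _))
      (continuous_mvnPDF _ _).aestronglyMeasurable]
  change _ = 2 * (∫⁻ z in Set.Iic (Sum.elim y fun _ => 0), _).toReal
  rw [setLIntegral_Iic_sumElim (continuous_mvnPDF _ _).measurable.ennreal_ofReal,
    lintegral_congr fun x => ofReal_esnPDF_zero_eq_two_mul_lintegral hS μ l x hΔ,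
    lintegral_const_mul' _ _ ENNReal.ofNat_ne_top, ENNReal.toReal_mul, ENNReal.toReal_ofNat]

/-- cdf of the skew-normal distribution (`τ = 0` case of the ESN):
`P(Y ≤ y) = 2 Φ_{p+1}((yᵀ, 0)ᵀ; μ*, Ω)`. -/
theorem sn_cdf {p : ℕ} (μ : Fin p → ℝ) (S : Matrix (Fin p) (Fin p) ℝ)
    (hS : S.PosDef) (l : Fin p → ℝ)
    {α : Type*} [MeasurableSpace α] (P : Measure α) [IsProbabilityMeasure P]
    (Y : α → Fin p → ℝ) (hYmeas : Measurable Y)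
    (hY : ∀ A : Set (Fin p → ℝ), MeasurableSet A →
      (P (Y ⁻¹' A)).toReal = ∫ x in A, esnPDF μ S hS l 0 x)
    (Δ : Fin p → ℝ)
    (hΔ : Δ = (Real.sqrt (1 + dotProduct l l))⁻¹ • (psdSqrt hS.posSemidef *ᵥ l))
    (Ωmat : Matrix (Fin p ⊕ Unit) (Fin p ⊕ Unit) ℝ)
    (hΩ : Ωmat = Matrix.fromBlocks S (Matrix.of fun i (_ : Unit) => -Δ i)
      (Matrix.of fun (_ : Unit) j => -Δ j) 1)
    (y : Fin p → ℝ) :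
    (P {ω | ∀ i, Y ω i ≤ y i}).toReal =
      2 * ∫ x in {x : (Fin p ⊕ Unit) → ℝ |
            ∀ j, x j ≤ Sum.elim y (fun _ => (0 : ℝ)) j},
          mvnPDF (Sum.elim μ (fun _ => (0 : ℝ))) Ωmat x :=
  sn_cdf_general μ S hS l P Y hY Δ hΔ Ωmat hΩ y
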